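/- Let n be a positive integer and β ∈ (0, 1). Then the n×n first-order stable spline kernel matrix K_β is invertible and K_β^(−1) = Δᵀ·W_β^(−1)·Δ, where Δ is the n×n upper bidiagonal matrix with 1 on the main diagonal, −1 on the superdiagonal, and 0 elsewhere, and W_β is the n×n diagonal matrix with diagonal entries (1−β)·β^i for i = 1,…,n−1 and β^n for i = n. -/

import Mathlib

/-!
Differencing the rows of `K_β` kills every entry right of the diagonal and leaves the constant
`β^(i+1) - β^(i+2) = (1-β)β^(i+1)` (just `β^n` in the last row) on and left of it, so
`Δ K_β = W_β L` with `L` the lower-triangular matrix of ones. Since `L` is a summation operator,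
it inverts the differencing `Δᵀ`, and then `Δᵀ W_β⁻¹ Δ K_β = Δᵀ L = 1`.
-/

open Matrix

/-- The first-order stable spline kernel: `(K_β)_{i,j} = β^(max(i,j))` for
`i, j = 1, …, n` (here indexed by `Fin n` via `i ↦ i + 1`). -/
def ssKernel (n : ℕ) (β : ℝ) : Matrix (Fin n) (Fin n) ℝ :=
  Matrix.of fun i j => β ^ (max (i : ℕ) (j : ℕ) + 1)

/-- The discrete derivator `Δ`: upper bidiagonal with `1` on the main diagonal and
`−1` on the superdiagonal. -/
def deltaMat (n : ℕ) : Matrix (Fin n) (Fin n) ℝ :=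
  Matrix.of fun i j => if j = i then 1 else if (j : ℕ) = (i : ℕ) + 1 then -1 else 0

/-- The diagonal matrix `W_β` with diagonal entries `(1−β)β^i` for `i = 1, …, n−1`
and `β^n` for `i = n`. -/
def wMat (n : ℕ) (β : ℝ) : Matrix (Fin n) (Fin n) ℝ :=
  Matrix.diagonal fun i => if (i : ℕ) + 1 = n then β ^ n else (1 - β) * β ^ ((i : ℕ) + 1)

def lowerOnes (n : ℕ) : Matrix (Fin n) (Fin n) ℝ :=
  of fun i j => if j ≤ i then 1 else 0

lemma deltaMat_apply (n : ℕ) (i k : Fin n) :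
    deltaMat n i k = (if k = i then 1 else 0) - if (k : ℕ) = i + 1 then 1 else 0 := by
  simp only [deltaMat, of_apply, Fin.ext_iff]
  split_ifs <;> first | omega | norm_num

lemma deltaMat_mul_apply (n : ℕ) (A : Matrix (Fin n) (Fin n) ℝ) (i j : Fin n) :
    (deltaMat n * A) i j = A i j - if h : (i : ℕ) + 1 < n then A ⟨i + 1, h⟩ j else 0 := by
  simp only [mul_apply, deltaMat_apply, sub_mul, ite_mul, one_mul, zero_mul,
    Finset.sum_sub_distrib, Finset.sum_ite_eq', Finset.mem_univ, if_true]
  congr 1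
  split_ifs with h
  · rw [Finset.sum_eq_single ⟨i + 1, h⟩] <;> simp +contextual [Fin.ext_iff]
  · exact Finset.sum_eq_zero fun k _ => if_neg (by omega)

lemma mul_deltaMat_transpose_apply (n : ℕ) (A : Matrix (Fin n) (Fin n) ℝ) (i j : Fin n) :
    (A * (deltaMat n)ᵀ) i j = A i j - if h : (j : ℕ) + 1 < n then A i ⟨j + 1, h⟩ else 0 := by
  rw [← transpose_apply (A * _), transpose_mul, transpose_transpose, deltaMat_mul_apply]
  rfl

lemma deltaMat_mul_ssKernel (n : ℕ) (β : ℝ) :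
    deltaMat n * ssKernel n β = wMat n β * lowerOnes n := by
  ext i j
  simp only [deltaMat_mul_apply, wMat, lowerOnes, ssKernel, diagonal_mul, of_apply, Fin.le_def]
  rcases le_or_gt (j : ℕ) i with hji | hij
  · have hmax : max (i : ℕ) j = i := max_eq_left hji
    split_ifs with h hlast hlast <;> try omega
    · rw [max_eq_left (by omega : (j : ℕ) ≤ i + 1), hmax]
      ring
    · rw [hmax, hlast]
      ring
  · have hmax : max (i : ℕ) j = j := max_eq_right hij.le
    rw [dif_pos (by omega), max_eq_right (show (i : ℕ) + 1 ≤ j by omega), hmax,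
      if_neg (not_le.mpr hij)]
    ring

lemma lowerOnes_mul_deltaMat_transpose (n : ℕ) : lowerOnes n * (deltaMat n)ᵀ = 1 := by
  ext i j
  simp only [mul_deltaMat_transpose_apply, lowerOnes, of_apply, one_apply, Fin.ext_iff,
    Fin.le_def]
  have := i.isLt
  split_ifs <;> first | omega | norm_num

lemma isUnit_wMat (n : ℕ) {β : ℝ} (hβ0 : β ≠ 0) (hβ1 : β ≠ 1) : IsUnit (wMat n β) := by
  refine isUnit_diagonal.mpr (Pi.isUnit_iff.mpr fun i => ?_)
  split_ifs
  · exact (pow_ne_zero _ hβ0).isUnit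
  · exact (mul_ne_zero (sub_ne_zero.mpr hβ1.symm) (pow_ne_zero _ hβ0)).isUnit

theorem ssKernel_inv_general (n : ℕ) (β : ℝ) (hβ : β ∈ Set.Ioo (0 : ℝ) 1) :
    IsUnit (ssKernel n β) ∧
      (ssKernel n β)⁻¹ = (deltaMat n)ᵀ * (wMat n β)⁻¹ * deltaMat n := by
  have hW : (wMat n β)⁻¹ * wMat n β = 1 :=
    nonsing_inv_mul _ ((isUnit_iff_isUnit_det _).mp (isUnit_wMat n hβ.1.ne' hβ.2.ne))
  have hleft : (deltaMat n)ᵀ * (wMat n β)⁻¹ * deltaMat n * ssKernel n β = 1 :=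
    calc (deltaMat n)ᵀ * (wMat n β)⁻¹ * deltaMat n * ssKernel n β
        = (deltaMat n)ᵀ * ((wMat n β)⁻¹ * wMat n β) * lowerOnes n := by
          rw [mul_assoc, deltaMat_mul_ssKernel]; simp only [mul_assoc]
      _ = 1 := by rw [hW, mul_one, mul_eq_one_comm.mp (lowerOnes_mul_deltaMat_transpose n)]
  exact ⟨.of_mul_eq_one_right _ hleft, inv_eq_left_inv hleft⟩

/-- For `β ∈ (0,1)`, the stable spline kernel is invertible with
`K_β⁻¹ = Δᵀ W_β⁻¹ Δ`. -/
theorem ssKernel_inv (n : ℕ) (hn : 0 < n) (β : ℝ) (hβ : β ∈ Set.Ioo (0 : ℝ) 1) :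
    IsUnit (ssKernel n β) ∧
      (ssKernel n β)⁻¹ = (deltaMat n)ᵀ * (wMat n β)⁻¹ * deltaMat n :=
  ssKernel_inv_general n β hβ
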